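/- Let A be a divisibility monoid and r ∈ A. The following are equivalent: (i) r is prime in A; (ii) every morphism f̂ : (x_n) → (y_m) in F(A) with r·∏x_n = ∏y_m is weakly prime; (iii) the 1-tuple (r) is weakly prime (i.e., the morphism (1) → (r) is weakly prime); (iv) some morphism with r·∏x_n = ∏y_m is weakly prime. Consequently, every weakly prime morphism is weakly irreducible. -/

import Mathlib

open Finset

/-- A function `f : [M] → [N]` is divisibility-constrained by tuples `x`, `y` when
`x n` divides the product of `y` over the fiber `f⁻¹(n)`; these are the morphisms
`(x_n) → (y_m)` in the category of factorization of a divisibility monoid. -/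
def DivConstrained {A : Type*} [CommMonoid A] {N M : ℕ} (x : Fin N → A) (y : Fin M → A)
    (f : Fin M → Fin N) : Prop :=
  ∀ n : Fin N, x n ∣ ∏ m ∈ Finset.univ.filter (fun m => f m = n), y m

/-- A morphism is a weak equivalence when, for each `n`, the element `r` with
`r * x n = ∏_{m ∈ f⁻¹(n)} y m` is invertible. -/
def IsWeakEquiv {A : Type*} [CommMonoid A] {N M : ℕ} (x : Fin N → A) (y : Fin M → A)
    (f : Fin M → Fin N) : Prop :=
  ∀ (n : Fin N) (r : A), r * x n = ∏ m ∈ Finset.univ.filter (fun m => f m = n), y m → IsUnit r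

/-- A morphism is weakly irreducible when it is not a weak equivalence and in
every factorization `f̂ = ĝ ∘ ĥ` one of the factors is a weak equivalence. -/
def WeaklyIrred {A : Type*} [CommMonoid A] {N M : ℕ} (x : Fin N → A) (y : Fin M → A)
    (f : Fin M → Fin N) : Prop :=
  ¬ IsWeakEquiv x y f ∧
    ∀ (P : ℕ) (z : Fin P → A) (h : Fin P → Fin N) (g : Fin M → Fin P),
      DivConstrained x z h → DivConstrained z y g → h ∘ g = f →
      IsWeakEquiv x z h ∨ IsWeakEquiv z y g

/-- A morphism with associated element `s` is weakly prime when it is not a weak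
equivalence and whenever it weakly divides a composite `ĝ ∘ ĥ` (whose associated
element is the product `q * r` of the associated elements of the factors), it
weakly divides `ĝ` or `ĥ`. -/
def WeaklyPrime {A : Type*} [CommMonoid A] {N M : ℕ} (x : Fin N → A) (y : Fin M → A)
    (f : Fin M → Fin N) : Prop :=
  ¬ IsWeakEquiv x y f ∧
    ∀ (s : A), s * ∏ n, x n = ∏ m, y m →
      ∀ (P Q R : ℕ) (a : Fin P → A) (b : Fin Q → A) (c : Fin R → A)
        (h : Fin Q → Fin P) (g : Fin R → Fin Q) (r q : A),
        DivConstrained a b h → DivConstrained b c g →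
        r * ∏ p, a p = ∏ k, b k → q * ∏ k, b k = ∏ k, c k →
        s ∣ q * r → s ∣ r ∨ s ∣ q

/-- `r` is prime in `A`: not invertible, and `r ∣ b*c` implies `r ∣ b` or `r ∣ c`. -/
def IsPrimeElt {A : Type*} [CommMonoid A] (r : A) : Prop :=
  ¬ IsUnit r ∧ ∀ b c : A, r ∣ b * c → r ∣ b ∨ r ∣ c

/-! Every morphism `f̂ : (x_n) → (y_m)` has a unique associated element `r` with
`r * ∏ x_n = ∏ y_m` (cancellativity), namely the product of the fiberwise quotients, and
`f̂` is a weak equivalence exactly when `r` is a unit. Weak primality of `f̂` only refers to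
`r`: it says that `r` is a non-unit dividing one factor of every product `q * r'` it divides,
and every such product is realised by the composite of `(1) → (r')` and `(r') → (r' q)`.
So `f̂` is weakly prime iff `r` is prime. For weak irreducibility, the associated element of
a factorisation `ĝ ∘ ĥ` is the product of those of `ĝ` and `ĥ`, and a prime cannot split into
two non-units. -/

section CancelCommMonoid

variable {A : Type*} [CancelCommMonoid A]

theorem IsPrimeElt.isUnit_or_isUnit {a b : A} (hp : IsPrimeElt (a * b)) :
    IsUnit a ∨ IsUnit b := by
  have isUnit_of_dvd {u v : A} (h : u * v ∣ u) : IsUnit v := by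
    obtain ⟨e, he⟩ := h
    refine IsUnit.of_mul_eq_one e (mul_left_cancel (a := u) ?_)
    rw [mul_one, ← mul_assoc]
    exact he.symm
  rcases hp.2 a b dvd_rfl with h | h
  · exact Or.inr (isUnit_of_dvd h)
  · exact Or.inl (isUnit_of_dvd (mul_comm a b ▸ h))

theorem divConstrained_singleton_iff {a b : A} :
    DivConstrained (fun _ : Fin 1 => a) (fun _ : Fin 1 => b) id ↔ a ∣ b := by
  simp [DivConstrained, filter_true_of_mem, Subsingleton.elim _ (0 : Fin 1)]

variable {N M : ℕ} {x : Fin N → A} {y : Fin M → A} {f : Fin M → Fin N}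

theorem DivConstrained.exists_fiber_quotients (dc : DivConstrained x y f) :
    ∃ t : Fin N → A, (∀ n, t n * x n = ∏ m ∈ univ.filter (fun m => f m = n), y m) ∧
      (∏ n, t n) * ∏ n, x n = ∏ m, y m := by
  choose t ht using dc
  refine ⟨t, fun n => by rw [mul_comm, ← ht n], ?_⟩
  rw [← prod_mul_distrib, prod_congr rfl (fun n _ => (mul_comm (t n) (x n)).trans (ht n).symm)]
  exact prod_fiberwise_of_maps_to (fun m _ => mem_univ (f m)) y

theorem DivConstrained.exists_assoc (dc : DivConstrained x y f) :
    ∃ r : A, r * ∏ n, x n = ∏ m, y m :=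
  let ⟨_, _, ht⟩ := dc.exists_fiber_quotients
  ⟨_, ht⟩

theorem DivConstrained.isWeakEquiv_iff_isUnit {r : A} (dc : DivConstrained x y f)
    (hr : r * ∏ n, x n = ∏ m, y m) : IsWeakEquiv x y f ↔ IsUnit r := by
  obtain ⟨t, hfiber, htotal⟩ := dc.exists_fiber_quotients
  obtain rfl : r = ∏ n, t n := mul_right_cancel (hr.trans htotal.symm)
  constructor
  · exact fun hwe => prod_induction _ IsUnit (fun _ _ => IsUnit.mul) isUnit_one
      (fun n _ => hwe n (t n) (hfiber n))
  · intro hu n s hs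
    obtain rfl : s = t n := mul_right_cancel (hs.trans (hfiber n).symm)
    exact isUnit_of_dvd_unit (dvd_prod_of_mem t (mem_univ n)) hu

theorem DivConstrained.weaklyPrime_iff_isPrimeElt {r : A} (dc : DivConstrained x y f)
    (hr : r * ∏ n, x n = ∏ m, y m) : WeaklyPrime x y f ↔ IsPrimeElt r := by
  rw [WeaklyPrime, IsPrimeElt, dc.isWeakEquiv_iff_isUnit hr]
  refine and_congr_right fun _ => ⟨fun wp b c hbc => ?_, fun hp s hs => ?_⟩
  · have h₁ := divConstrained_singleton_iff.mpr (one_dvd b)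
    have h₂ := divConstrained_singleton_iff.mpr (dvd_mul_right b c)
    exact (wp r hr 1 1 1 _ _ _ id id b c h₁ h₂ (by simp) (by simp [mul_comm])
      (mul_comm c b ▸ hbc)).imp id id
  · obtain rfl : s = r := mul_right_cancel (hs.trans hr.symm)
    intro _ _ _ _ _ _ _ _ r' q _ _ _ _ hdvd
    exact (hp q r' hdvd).symm

theorem DivConstrained.weaklyIrred_of_weaklyPrime (dc : DivConstrained x y f)
    (wp : WeaklyPrime x y f) : WeaklyIrred x y f := by
  refine ⟨wp.1, fun P z h g dch dcg _ => ?_⟩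
  obtain ⟨r₁, hr₁⟩ := dch.exists_assoc
  obtain ⟨r₂, hr₂⟩ := dcg.exists_assoc
  have hr : (r₂ * r₁) * ∏ n, x n = ∏ m, y m := by rw [mul_assoc, hr₁, hr₂]
  rw [dch.isWeakEquiv_iff_isUnit hr₁, dcg.isWeakEquiv_iff_isUnit hr₂]
  exact ((dc.weaklyPrime_iff_isPrimeElt hr).mp wp).isUnit_or_isUnit.symm

end CancelCommMonoid

/-- `r` is prime in `A` iff every (equivalently, some) morphism with associated
element `r` is weakly prime, iff the 1-tuple `(r)` is weakly prime; moreover every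
weakly prime morphism is weakly irreducible. -/
theorem stmt18 (A : Type*) [CancelCommMonoid A] (r : A) :
    (IsPrimeElt r ↔
      ∀ (N M : ℕ) (x : Fin N → A) (y : Fin M → A) (f : Fin M → Fin N),
        DivConstrained x y f → r * ∏ n, x n = ∏ m, y m → WeaklyPrime x y f) ∧
    (IsPrimeElt r ↔
      WeaklyPrime (fun _ : Fin 1 => (1 : A)) (fun _ : Fin 1 => r) id) ∧
    (IsPrimeElt r ↔
      ∃ (N M : ℕ) (x : Fin N → A) (y : Fin M → A) (f : Fin M → Fin N),
        DivConstrained x y f ∧ r * ∏ n, x n = ∏ m, y m ∧ WeaklyPrime x y f) ∧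
    (∀ (N M : ℕ) (x : Fin N → A) (y : Fin M → A) (f : Fin M → Fin N),
        DivConstrained x y f → WeaklyPrime x y f → WeaklyIrred x y f) := by
  have dc₀ := divConstrained_singleton_iff.mpr (one_dvd r)
  have hr₀ : r * ∏ _n : Fin 1, (1 : A) = ∏ _m : Fin 1, r := by simp
  have singleton_iff := dc₀.weaklyPrime_iff_isPrimeElt hr₀
  refine ⟨⟨fun hp N M x y f dc hr => (dc.weaklyPrime_iff_isPrimeElt hr).mpr hp,
      fun H => singleton_iff.mp (H 1 1 _ _ id dc₀ hr₀)⟩,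
    singleton_iff.symm,
    ⟨fun hp => ⟨1, 1, _, _, id, dc₀, hr₀, singleton_iff.mpr hp⟩,
      fun ⟨_, _, _, _, _, dc, hr, wp⟩ => (dc.weaklyPrime_iff_isPrimeElt hr).mp wp⟩,
    fun _ _ _ _ _ dc => dc.weaklyIrred_of_weaklyPrime⟩
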